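/- Let p > 3 be prime with |∑_{1 ≤ n < p} λ(n)λ(p−n)| = p − 1. Then S_λ(3ξ) = −S_λ(ξ) for all ξ ∈ ℤ/pℤ, where S_λ(ξ) := ∑_{1 ≤ n < p} λ(n)·exp(2πi·nξ/p). -/
import Mathlib


open Finset

def lam (n : ℕ) : ℤ := (-1) ^ (ArithmeticFunction.cardFactors n)

noncomputable def Slam (p : ℕ) (ξ : ℕ) : ℂ :=
  ∑ n ∈ Finset.Ico 1 p, (lam n : ℂ) * Complex.exp (2 * Real.pi * Complex.I * (n * ξ) / p)

lemma lam_mul {a b : ℕ} (ha : a ≠ 0) (hb : b ≠ 0) : lam (a * b) = lam a * lam b := by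
  unfold lam
  rw [ArithmeticFunction.cardFactors_mul ha hb, pow_add]

lemma lam_sq (n : ℕ) : lam n * lam n = 1 := by
  unfold lam
  rw [← pow_add, ← two_mul, pow_mul]
  norm_num

lemma lam_three : lam 3 = -1 := by
  unfold lam
  rw [ArithmeticFunction.cardFactors_apply_prime (by norm_num), pow_one]

lemma lam_two : lam 2 = -1 := by
  unfold lam
  rw [ArithmeticFunction.cardFactors_apply_prime (by norm_num), pow_one]

lemma lam_three_mul {k : ℕ} (hk : k ≠ 0) : lam (3 * k) = -lam k := by
  rw [lam_mul (by norm_num) hk, lam_three]; ring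

lemma lam_two_mul {k : ℕ} (hk : k ≠ 0) : lam (2 * k) = -lam k := by
  rw [lam_mul (by norm_num) hk, lam_two]; ring

lemma lam_abs (n : ℕ) : lam n = 1 ∨ lam n = -1 := by
  rcases Nat.even_or_odd (ArithmeticFunction.cardFactors n) with h | h
  · left; exact Even.neg_one_pow h
  · right; exact Odd.neg_one_pow h

lemma mod_mul_right_mod (a b p : ℕ) : (a * (b % p)) % p = (a * b) % p := by
  rw [Nat.mul_mod, Nat.mod_mod_of_dvd _ dvd_rfl, ← Nat.mul_mod]

lemma mod_mul_left_mod (a b p : ℕ) : ((a % p) * b) % p = (a * b) % p := by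
  rw [Nat.mul_mod, Nat.mod_mod_of_dvd _ dvd_rfl, ← Nat.mul_mod]

theorem stmt_9 (p : ℕ) (hp : p.Prime) (hp3 : 3 < p)
    (h : |∑ n ∈ Finset.Ico 1 p, lam n * lam (p - n)| = (p : ℤ) - 1) :
    ∀ ξ : ℕ, Slam p (3 * ξ) = -Slam p ξ := by
  have hp4 : 4 ≤ p := hp3
  have hpz : (3:ℤ) < (p:ℤ) := by exact_mod_cast hp3
  -- Step 1: all the terms lam n * lam (p - n) are equal to a common sign ε
  obtain ⟨ε, hεpm, hsame⟩ :
      ∃ ε : ℤ, ε * ε = 1 ∧ ∀ n ∈ Finset.Ico 1 p, lam n * lam (p - n) = ε := by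
    have hterm : ∀ n : ℕ, lam n * lam (p - n) = 1 ∨ lam n * lam (p - n) = -1 := by
      intro n
      rcases lam_abs n with h1 | h1 <;> rcases lam_abs (p - n) with h2 | h2 <;>
        simp [h1, h2]
    have hcast : ((p - 1 : ℕ) : ℤ) = (p : ℤ) - 1 := by
      push_cast [Nat.cast_sub (by omega : 1 ≤ p)]; ring
    rcases (abs_eq (by omega : (0:ℤ) ≤ (p:ℤ) - 1)).1 h with heq | heq
    · refine ⟨1, by norm_num, fun n hn => ?_⟩
      by_contra hne
      have hne' : lam n * lam (p - n) = -1 := (hterm n).resolve_left hne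
      have hlt : ∑ m ∈ Finset.Ico 1 p, lam m * lam (p - m)
          < ∑ _m ∈ Finset.Ico 1 p, (1 : ℤ) := by
        refine Finset.sum_lt_sum (fun i _ => ?_) ⟨n, hn, by omega⟩
        rcases hterm i with h' | h' <;> omega
      rw [Finset.sum_const, Nat.card_Ico, nsmul_eq_mul, mul_one, hcast, heq] at hlt
      omega
    · refine ⟨-1, by norm_num, fun n hn => ?_⟩
      by_contra hne
      have hne' : lam n * lam (p - n) = 1 := (hterm n).resolve_right hne
      have hlt : ∑ _m ∈ Finset.Ico 1 p, (-1 : ℤ)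
          < ∑ m ∈ Finset.Ico 1 p, lam m * lam (p - m) := by
        refine Finset.sum_lt_sum (fun i _ => ?_) ⟨n, hn, by omega⟩
        rcases hterm i with h' | h' <;> omega
      rw [Finset.sum_const, Nat.card_Ico, nsmul_eq_mul, mul_neg_one, hcast, heq] at hlt
      omega
  have hflip : ∀ n : ℕ, 1 ≤ n → n < p → lam (p - n) = ε * lam n := by
    intro n h1 h2
    have hs := hsame n (Finset.mem_Ico.2 ⟨h1, h2⟩)
    calc lam (p - n) = (lam n * lam n) * lam (p - n) := by rw [lam_sq]; ring
      _ = lam n * (lam n * lam (p - n)) := by ring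
      _ = ε * lam n := by rw [hs]; ring
  -- Step 2: the structure lemmas
  have hL2 : ∀ k : ℕ, 2*p < 3*k → k < p → lam (3*k - 2*p) = -lam k := by
    intro k h1 h2
    have hk1 : 1 ≤ k := by omega
    have e1 : lam (3*(p-k)) = -lam (p-k) := lam_three_mul (by omega)
    have e2 : lam (p-k) = ε * lam k := hflip k hk1 h2
    have e3 : lam (p - (3*k - 2*p)) = ε * lam (3*k - 2*p) :=
      hflip _ (by omega) (by omega)
    have e4 : p - (3*k - 2*p) = 3*(p-k) := by omega
    rw [e4, e1, e2] at e3
    -- e3 : -(ε * lam k) = ε * lam (3*k - 2*p)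
    calc lam (3*k - 2*p) = ε * (ε * lam (3*k - 2*p)) := by
          rw [← mul_assoc, hεpm, one_mul]
      _ = ε * (-(ε * lam k)) := by rw [← e3]
      _ = -((ε * ε) * lam k) := by ring
      _ = -lam k := by rw [hεpm]; ring
  have hL3a : ∀ k : ℕ, p < 3*k → 2*k < p → lam (3*k - p) = -lam k := by
    intro k h1 h2
    have hk1 : 1 ≤ k := by omega
    have e1 : lam (3*(2*k) - 2*p) = -lam (2*k) := hL2 (2*k) (by omega) (by omega)
    have e2 : 3*(2*k) - 2*p = 2*(3*k - p) := by omega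
    have e3 : lam (2*(3*k - p)) = -lam (3*k - p) := lam_two_mul (by omega)
    have e4 : lam (2*k) = -lam k := lam_two_mul (by omega)
    rw [e2, e3, e4] at e1
    linarith
  have hpodd : p % 2 = 1 := Nat.odd_iff.1 (hp.odd_of_ne_two (by omega))
  have hL3 : ∀ k : ℕ, p < 3*k → 3*k < 2*p → lam (3*k - p) = -lam k := by
    intro k h1 h2
    have hk1 : 1 ≤ k := by omega
    have hklt : k < p := by omega
    rcases lt_or_ge (2*k) p with hlt | hge
    · exact hL3a k h1 hlt
    · have hne : 2*k ≠ p := by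
        intro he
        have hdvd : (2:ℕ) ∣ p := ⟨k, he.symm⟩
        omega
      have h2k : p < 2*k := by omega
      have e1 : lam (3*(p-k) - p) = -lam (p-k) :=
        hL3a (p-k) (by omega) (by omega)
      have e2 : 3*(p-k) - p = p - (3*k - p) := by omega
      have e3 : lam (p - (3*k - p)) = ε * lam (3*k - p) :=
        hflip _ (by omega) (by omega)
      have e4 : lam (p-k) = ε * lam k := hflip k hk1 hklt
      rw [e2, e3, e4] at e1
      -- e1 : ε * lam (3*k - p) = -(ε * lam k)
      calc lam (3*k - p) = ε * (ε * lam (3*k - p)) := by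
            rw [← mul_assoc, hεpm, one_mul]
        _ = ε * (-(ε * lam k)) := by rw [e1]
        _ = -((ε * ε) * lam k) := by ring
        _ = -lam k := by rw [hεpm]; ring
  -- Key congruence lemma
  have hnd : ∀ k : ℕ, 1 ≤ k → k < p → ¬ p ∣ 3*k := by
    intro k h1 h2 hd
    rcases (Nat.Prime.dvd_mul hp).1 hd with h' | h'
    · exact absurd (Nat.le_of_dvd (by norm_num) h') (by omega)
    · exact absurd (Nat.le_of_dvd (by omega) h') (by omega)
  have hkey : ∀ k : ℕ, 1 ≤ k → k < p → lam ((3*k) % p) = -lam k := by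
    intro k h1 h2
    have hnd' := hnd k h1 h2
    have h3 : 3*k ≠ p := fun he => hnd' (he ▸ dvd_refl p)
    have h4 : 3*k ≠ 2*p := fun he => hnd' (he ▸ dvd_mul_left p 2)
    rcases show 3*k < p ∨ (p < 3*k ∧ 3*k < 2*p) ∨ (2*p < 3*k ∧ 3*k < 3*p) by omega
      with hc | hc | hc
    · rw [Nat.mod_eq_of_lt hc]; exact lam_three_mul (by omega)
    · have hm : (3*k) % p = 3*k - p := by
        rw [Nat.mod_eq_sub_mod (by omega), Nat.mod_eq_of_lt (by omega)]
      rw [hm]; exact hL3 k hc.1 hc.2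
    · have hm : (3*k) % p = 3*k - 2*p := by
        rw [Nat.mod_eq_sub_mod (by omega), Nat.mod_eq_sub_mod (by omega),
          show 3*k - p - p = 3*k - 2*p by omega, Nat.mod_eq_of_lt (by omega)]
      rw [hm]; exact hL2 k hc.1 (by omega)
  -- Step 3: reindex the exponential sum
  haveI : Fact p.Prime := ⟨hp⟩
  set c : ℕ := ((3 : ZMod p)⁻¹).val with hcdef
  have h3z : (3 : ZMod p) ≠ 0 := by
    have : ((3:ℕ) : ZMod p) ≠ 0 := by
      rw [Ne, ZMod.natCast_eq_zero_iff]
      exact fun hd => absurd (Nat.le_of_dvd (by norm_num) hd) (by omega)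
    simpa using this
  have hc1 : (3 * c) % p = 1 := by
    have hz : ((3 * c : ℕ) : ZMod p) = ((1:ℕ) : ZMod p) := by
      push_cast
      rw [hcdef, ZMod.natCast_val, ZMod.cast_id]
      rw [mul_inv_cancel₀ h3z]
    have hmod := (ZMod.natCast_eq_natCast_iff _ _ _).1 hz
    unfold Nat.ModEq at hmod
    have h1p : 1 % p = 1 := Nat.mod_eq_of_lt (by omega)
    rw [h1p] at hmod
    exact hmod
  intro ξ
  rw [Slam, Slam, ← Finset.sum_neg_distrib]
  refine Finset.sum_nbij' (fun n => (3*n) % p) (fun m => (c*m) % p) ?_ ?_ ?_ ?_ ?_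
  · -- maps into
    intro n hn
    show (3*n) % p ∈ Finset.Ico 1 p
    rw [Finset.mem_Ico] at hn ⊢
    have hlt : (3*n) % p < p := Nat.mod_lt _ (by omega)
    have hne0 : (3*n) % p ≠ 0 := fun h0 => hnd n hn.1 hn.2 (Nat.dvd_of_mod_eq_zero h0)
    omega
  · intro m hm
    show (c*m) % p ∈ Finset.Ico 1 p
    rw [Finset.mem_Ico] at hm ⊢
    have hlt : (c*m) % p < p := Nat.mod_lt _ (by omega)
    have hne0 : (c*m) % p ≠ 0 := by
      intro h0
      have hd := Nat.dvd_of_mod_eq_zero h0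
      rcases (Nat.Prime.dvd_mul hp).1 hd with h' | h'
      · have hz0 : (3*c) % p = 0 := Nat.mod_eq_zero_of_dvd (h'.mul_left 3)
        omega
      · exact absurd (Nat.le_of_dvd (by omega) h') (by omega)
    omega
  · -- left inverse
    intro n hn
    rw [Finset.mem_Ico] at hn
    show (c * ((3*n) % p)) % p = n
    rw [mod_mul_right_mod, show c * (3*n) = (3*c)*n by ring, ← mod_mul_left_mod, hc1,
      one_mul, Nat.mod_eq_of_lt hn.2]
  · -- right inverse
    intro m hm
    rw [Finset.mem_Ico] at hm
    show (3 * ((c*m) % p)) % p = m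
    rw [mod_mul_right_mod, show 3 * (c*m) = (3*c)*m by ring, ← mod_mul_left_mod, hc1,
      one_mul, Nat.mod_eq_of_lt hm.2]
  · -- terms match
    intro n hn
    rw [Finset.mem_Ico] at hn
    set r : ℕ := (3*n) % p with hrdef
    set q : ℕ := (3*n) / p with hqdef
    have hqr : p * q + r = 3*n := Nat.div_add_mod (3*n) p
    have hlam : (lam r : ℂ) = -(lam n : ℂ) := by
      rw [hrdef]
      exact_mod_cast congrArg (fun z : ℤ => (z : ℂ)) (hkey n hn.1 hn.2)
    have hargnat : n * (3*ξ) = r*ξ + (q*ξ)*p := by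
      calc n * (3*ξ) = (3*n)*ξ := by ring
        _ = (p*q + r)*ξ := by rw [hqr]
        _ = r*ξ + (q*ξ)*p := by ring
    have hpne : (p:ℂ) ≠ 0 := Nat.cast_ne_zero.2 (by omega)
    have harg : 2 * (Real.pi:ℂ) * Complex.I * ((n:ℂ) * ((3*ξ : ℕ):ℂ)) / (p:ℂ)
        = 2 * (Real.pi:ℂ) * Complex.I * ((r:ℂ) * (ξ:ℂ)) / (p:ℂ)
          + ((q*ξ : ℕ):ℤ) * (2 * (Real.pi:ℂ) * Complex.I) := by
      have hc2 : ((n:ℂ) * ((3*ξ:ℕ):ℂ)) = (r:ℂ)*(ξ:ℂ) + ((q*ξ:ℕ):ℂ)*(p:ℂ) := by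
        push_cast
        exact_mod_cast congrArg (fun z : ℕ => (z:ℂ)) hargnat
      rw [hc2]
      push_cast
      field_simp
    rw [harg, Complex.exp_add, Complex.exp_int_mul_two_pi_mul_I, mul_one, hlam]
    ring
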